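/- arXiv:1912.12778 — 2 statements merged into one kernel-verified Lean document; each statement's English description precedes it below -/
import Mathlib

section
/- Let U be a C^∞ harmonic function on an open set Ω ⊆ ℝ³ and let x ∈ Ω satisfy ∇U(x) ≠ 0. Then Δ(log‖∇U‖)(x) + 2K(x) = 0, where K(x) := ⟨∇U(x), adj(Hess U(x))·∇U(x)⟩/‖∇U(x)‖⁴ is the Gaussian curvature of the level surface of U through x. -/
open MeasureTheory Filter Metric

noncomputable section

/-- Euclidean 3-space. -/
abbrev E3 := EuclideanSpace ℝ (Fin 3)

/-- Divergence of a vector field on `ℝ³`. -/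
noncomputable def divg (F : E3 → E3) (x : E3) : ℝ :=
  ∑ i, fderiv ℝ (fun y => F y i) x (EuclideanSpace.single i 1)

/-- Hessian matrix of a real function on `ℝ³`. -/
noncomputable def hess (f : E3 → ℝ) (x : E3) : Matrix (Fin 3) (Fin 3) ℝ :=
  fun i j => fderiv ℝ (fun y => fderiv ℝ f y (EuclideanSpace.single j 1)) x
    (EuclideanSpace.single i 1)

/-- Euclidean Laplacian: the trace of the Hessian. -/
noncomputable def lap (f : E3 → ℝ) (x : E3) : ℝ := ∑ i, hess f x i i

/-- Unit normal of the level surface: `n = -∇f/‖∇f‖`. -/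
noncomputable def nvec (f : E3 → ℝ) (x : E3) : E3 := -‖gradient f x‖⁻¹ • gradient f x

/-- Mean curvature of the level surface: `H = -(1/2)·div n`. -/
noncomputable def meanH (f : E3 → ℝ) (x : E3) : ℝ := -(1/2) * divg (nvec f) x

/-- Gaussian curvature of the level surface:
`K = ⟨∇f, adj(Hess f)·∇f⟩ / ‖∇f‖⁴`. -/
noncomputable def gaussK (f : E3 → ℝ) (x : E3) : ℝ :=
  (∑ i, gradient f x i * ((hess f x).adjugate.mulVec (fun j => gradient f x j)) i) /
    ‖gradient f x‖ ^ 4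

/-- Tangential projection `P(x)·v = v - ⟨n,v⟩·n`. -/
noncomputable def ptang (f : E3 → ℝ) (x : E3) (v : E3) : E3 :=
  v - (inner ℝ (nvec f x) v : ℝ) • nvec f x

/-- `log E = log ‖∇f‖`. -/
noncomputable def logE (f : E3 → ℝ) (x : E3) : ℝ := Real.log ‖gradient f x‖

/-! ### Auxiliary machinery: coordinate partial derivatives -/

/-- `i`-th partial derivative. -/
noncomputable def pd (i : Fin 3) (f : E3 → ℝ) (y : E3) : ℝ :=
  fderiv ℝ f y (EuclideanSpace.single i 1)

lemma grad_apply (f : E3 → ℝ) (y : E3) (i : Fin 3) :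
    gradient f y i = pd i f y := by
  have h : (inner ℝ (gradient f y) (EuclideanSpace.single i (1:ℝ)) : ℝ)
      = fderiv ℝ f y (EuclideanSpace.single i 1) := by
    rw [gradient]; exact InnerProductSpace.toDual_symm_apply
  rw [EuclideanSpace.inner_single_right, one_mul, conj_trivial] at h; exact h

lemma hess_eq_pd (f : E3 → ℝ) (x : E3) (i j : Fin 3) :
    hess f x i j = pd i (pd j f) x := rfl

lemma lap_eq_pd (f : E3 → ℝ) (x : E3) :
    lap f x = ∑ i, pd i (pd i f) x := rfl

lemma contDiffOn_pd {s : Set E3} {f : E3 → ℝ} (hs : IsOpen s)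
    (hf : ContDiffOn ℝ (⊤ : ℕ∞) f s) (i : Fin 3) :
    ContDiffOn ℝ (⊤ : ℕ∞) (pd i f) s := by
  have h := hf.fderiv_of_isOpen hs (m := (⊤ : ℕ∞)) (by simp)
  exact h.clm_apply contDiffOn_const

lemma diffAt_of_contDiffOn {s : Set E3} {f : E3 → ℝ} (hs : IsOpen s)
    (hf : ContDiffOn ℝ (⊤ : ℕ∞) f s) {y : E3} (hy : y ∈ s) :
    DifferentiableAt ℝ f y :=
  (hf.contDiffAt (hs.mem_nhds hy)).differentiableAt (by simp)

section pdrules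

variable {a b g f : E3 → ℝ} {x y : E3} {i j : Fin 3} {s : Set E3}

lemma pd_congr {f g : E3 → ℝ} (h : f =ᶠ[nhds x] g) : pd i f x = pd i g x := by
  unfold pd; rw [h.fderiv_eq]

lemma pd_sum {ι : Type*} (u : Finset ι) (A : ι → E3 → ℝ)
    (h : ∀ k ∈ u, DifferentiableAt ℝ (A k) x) :
    pd i (fun y => ∑ k ∈ u, A k y) x = ∑ k ∈ u, pd i (A k) x := by
  unfold pd; rw [fderiv_fun_sum h]; simp

lemma pd_mul (ha : DifferentiableAt ℝ a x) (hb : DifferentiableAt ℝ b x) :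
    pd i (fun y => a y * b y) x = pd i a x * b x + a x * pd i b x := by
  unfold pd; rw [fderiv_fun_mul ha hb]; simp; ring

lemma pd_const_mul (ha : DifferentiableAt ℝ a x) (c : ℝ) :
    pd i (fun y => c * a y) x = c * pd i a x := by
  unfold pd; rw [fderiv_const_mul ha]; simp

lemma pd_sq (ha : DifferentiableAt ℝ a x) :
    pd i (fun y => a y ^ 2) x = 2 * a x * pd i a x := by
  have h : (fun y => a y ^ 2) = fun y => a y * a y := by funext y; ring
  rw [h, pd_mul ha ha]; ring

lemma pd_log (hg : DifferentiableAt ℝ g x) (h0 : g x ≠ 0) :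
    pd i (fun y => Real.log (g y)) x = pd i g x / g x := by
  unfold pd; rw [fderiv.log hg h0]; simp [div_eq_inv_mul]

lemma pd_inv (hb : DifferentiableAt ℝ b x) (h0 : b x ≠ 0) :
    pd i (fun y => (b y)⁻¹) x = -pd i b x / b x ^ 2 := by
  have h := ((hasDerivAt_inv h0).comp_hasFDerivAt x hb.hasFDerivAt).fderiv
  unfold pd
  rw [show (fun y => (b y)⁻¹) = (fun y => y⁻¹) ∘ b from rfl, h]
  simp [div_eq_inv_mul]

lemma pd_div (ha : DifferentiableAt ℝ a x) (hb : DifferentiableAt ℝ b x) (h0 : b x ≠ 0) :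
    pd i (fun y => a y / b y) x
      = (pd i a x * b x - a x * pd i b x) / b x ^ 2 := by
  have h1 : (fun y => a y / b y) = fun y => a y * (b y)⁻¹ := by
    funext y; rw [div_eq_mul_inv]
  rw [h1, pd_mul (b := fun y => (b y)⁻¹) ha (hb.inv h0), pd_inv hb h0]
  field_simp; ring

lemma pd_eq_snd (hdf : DifferentiableAt ℝ (fderiv ℝ f) y) :
    pd i (pd j f) y = fderiv ℝ (fderiv ℝ f) y (EuclideanSpace.single i 1)
      (EuclideanSpace.single j 1) := by
  have h2 := ((ContinuousLinearMap.apply ℝ ℝ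
      (EuclideanSpace.single j (1:ℝ))).hasFDerivAt.comp y hdf.hasFDerivAt).fderiv
  unfold pd
  rw [show (fun z => fderiv ℝ f z (EuclideanSpace.single j 1)) =
    (ContinuousLinearMap.apply ℝ ℝ (EuclideanSpace.single j (1:ℝ))) ∘ (fderiv ℝ f) from rfl, h2]
  simp

lemma pd_comm (hs : IsOpen s) (hf : ContDiffOn ℝ (⊤ : ℕ∞) f s) (hy : y ∈ s) :
    pd i (pd j f) y = pd j (pd i f) y := by
  have hc : ContDiffAt ℝ 2 f y :=
    (hf.contDiffAt (hs.mem_nhds hy)).of_le (WithTop.coe_le_coe.mpr le_top)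
  have hdf : DifferentiableAt ℝ (fderiv ℝ f) y := by
    have h2 : ContDiffAt ℝ 1 (fderiv ℝ f) y := by
      have h := hf.fderiv_of_isOpen hs (m := (⊤ : ℕ∞)) (by simp)
      exact (h.contDiffAt (hs.mem_nhds hy)).of_le (WithTop.coe_le_coe.mpr le_top)
    exact h2.differentiableAt one_ne_zero
  rw [pd_eq_snd hdf, pd_eq_snd hdf]
  exact hc.isSymmSndFDerivAt (by simp) _ _

end pdrules

/-- For a smooth harmonic function `U` on an open `Ω ⊆ ℝ³` and a point
`x ∈ Ω` with `∇U(x) ≠ 0`, one has `Δ(log‖∇U‖)(x) + 2K(x) = 0`. -/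
theorem stmt10 (Ω : Set E3) (U : E3 → ℝ)
    (hopen : IsOpen Ω)
    (hsmooth : ContDiffOn ℝ (⊤ : ℕ∞) U Ω)
    (hharm : ∀ y ∈ Ω, lap U y = 0)
    (x : E3) (hx : x ∈ Ω) (hgrad : gradient U x ≠ 0) :
    lap (logE U) x + 2 * gaussK U x = 0 := by
  classical
  set G : E3 → ℝ := fun y => ∑ k, (pd k U y) ^ 2 with hGdef
  have hpd : ∀ k, ContDiffOn ℝ (⊤ : ℕ∞) (pd k U) Ω := fun k => contDiffOn_pd hopen hsmooth k
  have hpd2 : ∀ i k, ContDiffOn ℝ (⊤ : ℕ∞) (pd i (pd k U)) Ω :=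
    fun i k => contDiffOn_pd hopen (hpd k) i
  have hG : ContDiffOn ℝ (⊤ : ℕ∞) G Ω := by
    apply ContDiffOn.sum; intro k _; exact (hpd k).pow 2
  have hpdG : ∀ i, ContDiffOn ℝ (⊤ : ℕ∞) (pd i G) Ω := fun i => contDiffOn_pd hopen hG i
  have dAt : ∀ {f : E3 → ℝ}, ContDiffOn ℝ (⊤ : ℕ∞) f Ω →
      ∀ {y : E3}, y ∈ Ω → DifferentiableAt ℝ f y :=
    fun hf _ hy => diffAt_of_contDiffOn hopen hf hy
  -- the global formula for logE U
  have hns : ∀ y : E3, ∑ k, ‖gradient U y k‖ ^ 2 = G y := by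
    intro y; simp [hGdef, Real.norm_eq_abs, sq_abs, grad_apply]
  have hGnn : ∀ y : E3, 0 ≤ G y := by
    intro y; exact Finset.sum_nonneg fun k _ => sq_nonneg _
  have hlogE : logE U = fun y => (1 / 2) * Real.log (G y) := by
    funext y
    rw [logE, EuclideanSpace.norm_eq, hns y, Real.log_sqrt (hGnn y)]
    ring
  have hnorm2 : ‖gradient U x‖ ^ 2 = G x := by
    rw [EuclideanSpace.norm_eq, Real.sq_sqrt]
    · exact hns x
    · rw [hns x]; exact hGnn x
  have hGpos : 0 < G x := by
    rw [← hnorm2]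
    have : 0 < ‖gradient U x‖ := norm_pos_iff.mpr hgrad
    positivity
  have hGne : ∀ᶠ y in nhds x, G y ≠ 0 := by
    have hcont : ContinuousAt G x := (hG.continuousOn.continuousAt (hopen.mem_nhds hx))
    exact hcont.eventually_ne hGpos.ne'
  have hmem : ∀ᶠ y in nhds x, y ∈ Ω := hopen.eventually_mem hx
  -- first derivative of logE
  have hB : ∀ i, pd i (logE U) =ᶠ[nhds x] fun y => pd i G y / (2 * G y) := by
    intro i
    filter_upwards [hmem, hGne] with y hyΩ hGy
    rw [hlogE]
    have h1 : DifferentiableAt ℝ (fun z => Real.log (G z)) y := (dAt hG hyΩ).log hGy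
    rw [pd_const_mul h1, pd_log (dAt hG hyΩ) hGy]
    ring
  -- derivative of G
  have hC : ∀ i, pd i G =ᶠ[nhds x] fun y => ∑ k, 2 * (pd k U y * pd i (pd k U) y) := by
    intro i
    filter_upwards [hmem] with y hyΩ
    rw [hGdef, pd_sum Finset.univ (fun k y => pd k U y ^ 2) (fun k _ => (dAt (hpd k) hyΩ).pow 2)]
    exact Finset.sum_congr rfl fun k _ => by rw [pd_sq (dAt (hpd k) hyΩ)]; ring
  have hCx : ∀ i, pd i G x = ∑ k, 2 * (pd k U x * pd i (pd k U) x) :=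
    fun i => (hC i).eq_of_nhds
  -- second derivative of G
  have hD : ∀ i, pd i (pd i G) x
      = ∑ k, 2 * (pd i (pd k U) x * pd i (pd k U) x
        + pd k U x * pd i (pd i (pd k U)) x) := by
    intro i
    rw [pd_congr (hC i)]
    rw [pd_sum Finset.univ (fun k y => 2 * (pd k U y * pd i (pd k U) y))
      (fun k _ => ((dAt (hpd k) hx).mul (dAt (hpd2 i k) hx)).const_mul 2)]
    refine Finset.sum_congr rfl fun k _ => ?_
    rw [pd_const_mul (a := fun y => pd k U y * pd i (pd k U) y) ((dAt (hpd k) hx).mul (dAt (hpd2 i k) hx)) 2,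
      pd_mul (dAt (hpd k) hx) (dAt (hpd2 i k) hx)]
  -- second derivative of logE
  have hlap2 : ∀ i, pd i (pd i (logE U)) x
      = (pd i (pd i G) x * (2 * G x) - pd i G x * (2 * pd i G x)) / (2 * G x) ^ 2 := by
    intro i
    rw [pd_congr (hB i)]
    have ha := dAt (hpdG i) hx
    have hb : DifferentiableAt ℝ (fun y => 2 * G y) x := (dAt hG hx).const_mul 2
    have h0 : (2 : ℝ) * G x ≠ 0 := mul_ne_zero two_ne_zero hGpos.ne'
    rw [pd_div ha hb h0, pd_const_mul (dAt hG hx) 2]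
  -- third derivative sums vanish (harmonicity)
  have hR : ∀ k, pd 0 (pd 0 (pd k U)) x + pd 1 (pd 1 (pd k U)) x
      + pd 2 (pd 2 (pd k U)) x = 0 := by
    intro k
    have hstep : ∀ i, pd i (pd i (pd k U)) x = pd k (pd i (pd i U)) x := by
      intro i
      have he : pd i (pd k U) =ᶠ[nhds x] pd k (pd i U) := by
        filter_upwards [hmem] with y hy
        exact pd_comm hopen hsmooth hy
      rw [pd_congr he]
      exact pd_comm hopen (contDiffOn_pd hopen hsmooth i) hx
    have hsum : ∑ i, pd k (pd i (pd i U)) x = pd k (fun y => ∑ i, pd i (pd i U) y) x :=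
      (pd_sum Finset.univ _ (fun i _ => dAt (hpd2 i i) hx)).symm
    have hzero : (fun y => ∑ i, pd i (pd i U) y) =ᶠ[nhds x] (fun _ => (0 : ℝ)) := by
      filter_upwards [hmem] with y hy
      have h := hharm y hy
      rw [lap_eq_pd] at h
      exact h
    have hfin : ∑ i, pd i (pd i (pd k U)) x = 0 := by
      rw [Finset.sum_congr rfl (fun i _ => hstep i), hsum, pd_congr hzero]
      unfold pd
      simp
    simpa [Fin.sum_univ_three] using hfin
  -- harmonicity at x
  have htr : pd 0 (pd 0 U) x + pd 1 (pd 1 U) x + pd 2 (pd 2 U) x = 0 := by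
    have h := hharm x hx
    rw [lap_eq_pd] at h
    simpa [Fin.sum_univ_three] using h
  -- compute lap (logE U) x
  have hlapval : lap (logE U) x
      = ∑ i, ((∑ k, 2 * (pd i (pd k U) x * pd i (pd k U) x
          + pd k U x * pd i (pd i (pd k U)) x)) * (2 * G x)
        - (∑ k, 2 * (pd k U x * pd i (pd k U) x))
          * (2 * (∑ k, 2 * (pd k U x * pd i (pd k U) x)))) / (2 * G x) ^ 2 := by
    rw [lap_eq_pd]
    refine Finset.sum_congr rfl fun i _ => ?_
    rw [hlap2 i, hD i, hCx i]
  -- compute gaussK U x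
  have hKval : gaussK U x
      = (∑ i, pd i U x * ((hess U x).adjugate.mulVec (fun j => pd j U x)) i) / (G x) ^ 2 := by
    rw [gaussK]
    have h4 : ‖gradient U x‖ ^ 4 = (G x) ^ 2 := by
      rw [show ‖gradient U x‖ ^ 4 = (‖gradient U x‖ ^ 2) ^ 2 by ring, hnorm2]
    rw [h4]
    congr 1
    refine Finset.sum_congr rfl fun i _ => ?_
    rw [grad_apply]
    congr 1
    congr 1
    funext j
    rw [grad_apply]
  rw [hlapval, hKval]
  -- expand everything
  have h22 : pd 2 (pd 2 U) x = -(pd 0 (pd 0 U) x + pd 1 (pd 1 U) x) := by linarith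
  have hR2 : ∀ k, pd 2 (pd 2 (pd k U)) x
      = -(pd 0 (pd 0 (pd k U)) x + pd 1 (pd 1 (pd k U)) x) := fun k => by linarith [hR k]
  have hs10 : pd 1 (pd 0 U) x = pd 0 (pd 1 U) x := pd_comm hopen hsmooth hx
  have hs20 : pd 2 (pd 0 U) x = pd 0 (pd 2 U) x := pd_comm hopen hsmooth hx
  have hs21 : pd 2 (pd 1 U) x = pd 1 (pd 2 U) x := pd_comm hopen hsmooth hx
  have hGexp : G x = pd 0 U x ^ 2 + pd 1 U x ^ 2 + pd 2 U x ^ 2 := by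
    rw [hGdef]; simp [Fin.sum_univ_three]
  have hg0 : pd 0 U x ^ 2 + pd 1 U x ^ 2 + pd 2 U x ^ 2 ≠ 0 := by
    rw [← hGexp]; exact hGpos.ne'
  simp only [Matrix.adjugate_fin_three, Matrix.mulVec, dotProduct,
    Fin.sum_univ_three, hess_eq_pd, Matrix.cons_val', Matrix.cons_val_zero,
    Matrix.cons_val_one, Matrix.head_cons, Matrix.empty_val',
    Matrix.cons_val_fin_one, Matrix.head_fin_const, Matrix.of_apply, Matrix.cons_val]
  rw [hGexp, hs10, hs20, hs21, h22, hR2 0, hR2 1, hR2 2]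
  field_simp
  ring
end
end

section
/- Let U be a C^∞ harmonic function on an open set Ω ⊆ ℝ³ and let x ∈ Ω satisfy ∇U(x) ≠ 0. With n := −∇U/‖∇U‖, E := ‖∇U‖, H(x) := −(1/2)·div(n)(x), and J_n(x) the Jacobian matrix of n at x, one has the decomposition ∇(log E)(x) = J_n(x)·n(x) + 2H(x)·n(x); here J_n(x)·n(x) = ((n·∇)n)(x) is the curvature vector of the field line of ∇U through x, which is orthogonal to n(x), and 2H(x) is twice the mean curvature of the level surface of U through x. -/
open MeasureTheory Filter Metric

noncomputable section

/-- Jacobian matrix of the unit normal field `n`. -/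
noncomputable def jacn (f : E3 → ℝ) (x : E3) : Matrix (Fin 3) (Fin 3) ℝ :=
  fun i j => fderiv ℝ (fun y => nvec f y i) x (EuclideanSpace.single j 1)

/-- Tangential projection matrix `P = I - n nᵀ`. -/
noncomputable def pmat (f : E3 → ℝ) (x : E3) : Matrix (Fin 3) (Fin 3) ℝ :=
  fun i j => (if i = j then (1:ℝ) else 0) - nvec f x i * nvec f x j

/-- Weingarten (shape operator) matrix `Ŵ = -J_n · P`. -/
noncomputable def wein (f : E3 → ℝ) (x : E3) : Matrix (Fin 3) (Fin 3) ℝ :=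
  -(jacn f x * pmat f x)


/-- Components of the gradient are directional derivatives. -/
theorem grad_comp' (f : E3 → ℝ) (y : E3) (i : Fin 3) :
    gradient f y i = fderiv ℝ f y (EuclideanSpace.single i 1) := by
  have h2 : fderiv ℝ f y (EuclideanSpace.single i 1)
      = (inner ℝ (gradient f y) (EuclideanSpace.single i 1 : E3) : ℝ) := by
    rw [← InnerProductSpace.toDual_apply_apply, gradient,
      (InnerProductSpace.toDual ℝ E3).apply_symm_apply]
  rw [h2, EuclideanSpace.inner_single_right]; simp

set_option maxHeartbeats 2000000 in
/-- Decomposition of `∇(log E)` at a point with `∇U ≠ 0`: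
`∇(log E) = J_n·n + 2H·n`, and the field-line curvature vector `J_n·n` is orthogonal
to `n`. -/
theorem stmt12 (Ω : Set E3) (U : E3 → ℝ)
    (hopen : IsOpen Ω)
    (hsmooth : ContDiffOn ℝ (⊤ : ℕ∞) U Ω)
    (hharm : ∀ y ∈ Ω, lap U y = 0)
    (x : E3) (hx : x ∈ Ω) (hgrad : gradient U x ≠ 0) :
    (∀ i, gradient (logE U) x i =
      (jacn U x).mulVec (fun j => nvec U x j) i + 2 * meanH U x * nvec U x i) ∧
    (∑ i, (jacn U x).mulVec (fun j => nvec U x j) i * nvec U x i = 0) := by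

  have hU : ContDiffAt ℝ (⊤:ℕ∞) U x := hsmooth.contDiffAt (hopen.mem_nhds hx)
  have hdU : ContDiffAt ℝ (⊤:ℕ∞) (fderiv ℝ U) x := hU.fderiv_right (by simp)
  have hD2' : DifferentiableAt ℝ (fderiv ℝ U) x :=
    hdU.differentiableAt (by simp)
  have hsym' : IsSymmSndFDerivAt ℝ U x :=
    hU.isSymmSndFDerivAt (by rw [minSmoothness_of_isRCLikeNormedField]; exact WithTop.coe_le_coe.mpr (le_top : (2:ℕ∞) ≤ ⊤))
  set e : Fin 3 → E3 := fun i => EuclideanSpace.single i 1 with he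
  set D2 : E3 →L[ℝ] E3 →L[ℝ] ℝ := fderiv ℝ (fderiv ℝ U) x with hD2def
  set L : Fin 3 → (E3 →L[ℝ] ℝ) :=
    fun i => (ContinuousLinearMap.apply ℝ ℝ (e i)).comp D2 with hLdef
  set Dm : Fin 3 → Fin 3 → ℝ := fun i j => D2 (e j) (e i) with hDmdef
  have hDsym : ∀ i j, Dm i j = Dm j i := fun i j => hsym' (e j) (e i)
  -- derivative of the gradient components
  have hgi : ∀ i, HasFDerivAt (fun y => fderiv ℝ U y (e i)) (L i) x := fun i =>
    ((ContinuousLinearMap.apply ℝ ℝ (e i)).hasFDerivAt).comp x hD2'.hasFDerivAt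
  have hLapp : ∀ i j, L i (e j) = Dm i j := fun i j => rfl
  -- values at x
  set a : Fin 3 → ℝ := fun i => fderiv ℝ U x (e i) with hadef
  -- N = |grad|^2 as function
  set Nf : E3 → ℝ := fun y => ∑ i, fderiv ℝ U y (e i) * fderiv ℝ U y (e i) with hNfdef
  have hnorm : ∀ y, ‖gradient U y‖ = Real.sqrt (Nf y) := by
    intro y
    rw [EuclideanSpace.norm_eq]
    congr 1
    refine Finset.sum_congr rfl fun i _ => ?_
    rw [grad_comp', Real.norm_eq_abs, sq_abs, sq]
  have hNnn : (0:ℝ) ≤ Nf x := Finset.sum_nonneg fun i _ => mul_self_nonneg _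
  set s : ℝ := Real.sqrt (Nf x) with hsdef
  have hspos : 0 < s := by
    rw [hsdef, ← hnorm x]; exact norm_pos_iff.mpr hgrad
  have hsne : s ≠ 0 := ne_of_gt hspos
  have hs2 : s ^ 2 = Nf x := Real.sq_sqrt hNnn
  have hNne : Nf x ≠ 0 := by rw [← hs2]; positivity
  -- derivative of Nf
  set LN : E3 →L[ℝ] ℝ := ∑ i, (a i • L i + a i • L i) with hLNdef
  have hN : HasFDerivAt Nf LN x := HasFDerivAt.fun_sum fun i _ => (hgi i).fun_mul (hgi i)
  have hLN : ∀ j, LN (e j) = ∑ k, 2 * (a k * Dm k j) := by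
    intro j
    rw [hLNdef, ContinuousLinearMap.sum_apply]
    refine Finset.sum_congr rfl fun k _ => ?_
    simp [hLapp, two_mul]
  -- derivative of sqrt Nf
  have hsq : HasFDerivAt (fun y => Real.sqrt (Nf y)) ((1/(2*s)) • LN) x := by
    exact (Real.hasDerivAt_sqrt hNne).comp_hasFDerivAt x hN
  set Lh : E3 →L[ℝ] ℝ := (-(s^2)⁻¹) • ((1/(2*s)) • LN) with hLhdef
  have hinv : HasFDerivAt (fun y => (Real.sqrt (Nf y))⁻¹) Lh x := by
    exact (hasDerivAt_inv hsne).comp_hasFDerivAt x hsq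
  -- nvec components
  have hnfun : ∀ i, (fun y => nvec U y i)
      = (fun y => -((Real.sqrt (Nf y))⁻¹ * fderiv ℝ U y (e i))) := by
    intro i; funext y
    rw [nvec]
    show (-‖gradient U y‖⁻¹ • gradient U y) i = _
    rw [PiLp.smul_apply, smul_eq_mul, hnorm y, grad_comp']
    ring
  set Ln : Fin 3 → (E3 →L[ℝ] ℝ) := fun i => -(s⁻¹ • L i + a i • Lh) with hLndef
  have hnv : ∀ i, HasFDerivAt (fun y => nvec U y i) (Ln i) x := by
    intro i
    rw [hnfun i]
    exact ((hinv.mul (hgi i)).neg)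
  have hjac : ∀ i j, jacn U x i j = Ln i (e j) := by
    intro i j
    rw [jacn]
    show fderiv ℝ (fun y => nvec U y i) x (e j) = _
    rw [(hnv i).fderiv]
  -- jacn explicit
  have hjac' : ∀ i j, jacn U x i j
      = -(s⁻¹ * Dm i j + a i * (-(s^2)⁻¹ * ((1/(2*s)) * (∑ k, 2 * (a k * Dm k j))))) := by
    intro i j
    rw [hjac i j, hLndef]
    simp [hLapp, hLhdef, hLN]
  -- divergence of nvec
  have hdiv : divg (nvec U) x = ∑ j, (-(s⁻¹ * Dm j j
      + a j * (-(s^2)⁻¹ * ((1/(2*s)) * (∑ k, 2 * (a k * Dm k j)))))) := by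
    rw [divg]
    refine Finset.sum_congr rfl fun j _ => ?_
    rw [show fderiv ℝ (fun y => nvec U y j) x (EuclideanSpace.single j 1)
        = jacn U x j j from rfl, hjac' j j]
  -- logE
  have hlogfun : logE U = fun y => (1/2) * Real.log (Nf y) := by
    funext y
    rw [logE, hnorm y, Real.log_sqrt (Finset.sum_nonneg fun i _ => mul_self_nonneg _)]
    ring
  have hlogd : HasFDerivAt (logE U) ((1/2:ℝ) • ((Nf x)⁻¹ • LN)) x := by
    rw [hlogfun]
    exact ((Real.hasDerivAt_log hNne).comp_hasFDerivAt x hN).const_mul _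
  have hgradlog : ∀ i, gradient (logE U) x i
      = (1/2) * ((Nf x)⁻¹ * (∑ k, 2 * (a k * Dm k i))) := by
    intro i
    rw [grad_comp', hlogd.fderiv, show (EuclideanSpace.single i 1 : E3) = e i from rfl]
    simp [hLN]
  -- nvec value at x
  have hnx : ∀ i, nvec U x i = -(s⁻¹ * a i) := by
    intro i
    rw [congrFun (hnfun i) x]
  -- trace zero
  have htr : ∑ i, Dm i i = 0 := by
    have h0 := hharm x hx
    rw [lap] at h0
    rw [← h0]
    refine Finset.sum_congr rfl fun i _ => ?_
    rw [hess]
    show Dm i i = fderiv ℝ (fun y => fderiv ℝ U y (e i)) x (e i)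
    rw [(hgi i).fderiv]; rfl
  have h22 : Dm 2 2 = -(Dm 0 0) - Dm 1 1 := by
    have h := htr; rw [Fin.sum_univ_three] at h; linarith
  have hNfa : Nf x = ∑ i, a i * a i := rfl
  have hs2sum : (∑ i, a i * a i) = s ^ 2 := by rw [← hNfa, hs2]
  set B : Fin 3 → ℝ := fun j => ∑ k, 2 * (a k * Dm k j) with hBdef
  set AA : ℝ := ∑ i, ∑ j, a i * a j * Dm i j with hAAdef
  have hBa : (∑ j, a j * B j) = 2 * AA := by
    calc ∑ j, a j * B j = ∑ j, ∑ k, a k * a j * Dm k j * 2 := by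
          refine Finset.sum_congr rfl fun j _ => ?_
          rw [hBdef, Finset.mul_sum]
          exact Finset.sum_congr rfl fun k _ => by ring
      _ = ∑ k, ∑ j, a k * a j * Dm k j * 2 := Finset.sum_comm
      _ = 2 * AA := by
          rw [hAAdef, Finset.mul_sum]
          refine Finset.sum_congr rfl fun i _ => ?_
          rw [Finset.mul_sum]
          exact Finset.sum_congr rfl fun j _ => by ring
  constructor
  · intro i
    rw [hgradlog i, meanH, hdiv]
    simp only [Matrix.mulVec, dotProduct]
    simp only [hjac', hnx, ← hs2]
    simp only [Fin.sum_univ_three]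
    rw [hDsym 0 i, hDsym 1 i, hDsym 2 i, h22]
    field_simp
    ring
  · simp only [Matrix.mulVec, dotProduct]
    simp_rw [Finset.sum_mul]
    have hterm : ∀ i j : Fin 3, jacn U x i j * nvec U x j * nvec U x i
        = -(s⁻¹*s⁻¹*s⁻¹) * (a i * a j * Dm i j)
          + ((s^2)⁻¹ * (1/(2*s)) * (s⁻¹*s⁻¹)) * ((a i * a i) * (a j * B j)) := by
      intro i j; rw [hjac', hnx, hnx]; ring
    calc ∑ i, ∑ j, jacn U x i j * nvec U x j * nvec U x i
        = ∑ i, ∑ j, (-(s⁻¹*s⁻¹*s⁻¹) * (a i * a j * Dm i j)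
          + ((s^2)⁻¹ * (1/(2*s)) * (s⁻¹*s⁻¹)) * ((a i * a i) * (a j * B j))) :=
          Finset.sum_congr rfl fun i _ => Finset.sum_congr rfl fun j _ => hterm i j
      _ = -(s⁻¹*s⁻¹*s⁻¹) * AA
          + ((s^2)⁻¹ * (1/(2*s)) * (s⁻¹*s⁻¹)) * ((∑ i, a i * a i) * (∑ j, a j * B j)) := by
          rw [hAAdef, Finset.sum_mul_sum]
          simp_rw [Finset.mul_sum, ← Finset.sum_add_distrib]
      _ = 0 := by
          rw [hs2sum, hBa]
          field_simp
          ring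
end
end
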